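/- Assume M ∉ {0, −2, −4, …}. For 0 ≤ i ≤ ⌊k/2⌋ define the operator ℙ̃_i^k = ∏_{l=0, l≠i}^{⌊k/2⌋} (Δ_LB + (k−2l)(M−2+k−2l)) / (2(i−l)(2k−2i−2l+M−2)) acting on 𝒫_k (all denominators are nonzero under the assumption on M). Then for all 0 ≤ i, j ≤ ⌊k/2⌋ and all H_{k−2j} ∈ ℋ_{k−2j}: ℙ̃_i^k(x^{2j} H_{k−2j}) = δ_{ij} x^{2j} H_{k−2j}. -/

import Mathlib

set_option synthInstance.maxHeartbeats 1000000
set_option maxHeartbeats 1000000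
open scoped TensorProduct
open MvPolynomial

noncomputable section

variable (m n : ℕ)

/-- The Grassmann algebra Λ_{2n} on `2n` anticommuting generators. -/
abbrev Grass (n : ℕ) := ExteriorAlgebra ℝ (Fin (2*n) → ℝ)

/-- The algebra of super-polynomials 𝒫 = ℝ[x_1,…,x_m] ⊗ Λ_{2n}. -/
abbrev SuperPoly (m n : ℕ) := MvPolynomial (Fin m) ℝ ⊗[ℝ] Grass n

/-- The fermionic generator x`_i. -/
def fgen (i : Fin (2*n)) : Grass n :=
  ExteriorAlgebra.ι ℝ (Pi.single i (1:ℝ))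

/-- The fermionic partial derivative ∂_{x`_i}, the odd derivation with
∂_{x`_i}(x`_j) = δ_{ij}: contraction with the i-th dual basis vector. -/
def fpderiv (i : Fin (2*n)) : Grass n →ₗ[ℝ] Grass n :=
  CliffordAlgebra.contractLeft (LinearMap.proj i)

/-- The fermionic Laplace operator on Λ_{2n}. -/
def lapF : Grass n →ₗ[ℝ] Grass n :=
  (4:ℝ) • ∑ j : Fin n,
    (fpderiv n ⟨2*j.1, by omega⟩) ∘ₗ (fpderiv n ⟨2*j.1+1, by omega⟩)

/-- The bosonic Laplace operator Δ_b = −∑ ∂_{x_j}² on ℝ[x_1,…,x_m]. -/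
def lapB : MvPolynomial (Fin m) ℝ →ₗ[ℝ] MvPolynomial (Fin m) ℝ :=
  - ∑ j : Fin m, (pderiv j).toLinearMap ∘ₗ (pderiv j).toLinearMap

/-- The super Laplace operator Δ = Δ_b + Δ_f on 𝒫. -/
def lap : SuperPoly m n →ₗ[ℝ] SuperPoly m n :=
  LinearMap.rTensor (Grass n) (lapB m) + LinearMap.lTensor (MvPolynomial (Fin m) ℝ) (lapF n)

/-- x̲² = −∑ x_j². -/
def rb2 : MvPolynomial (Fin m) ℝ := - ∑ j : Fin m, (X j)^2

/-- x`² = ∑_{j=1}^n x`_{2j−1} x`_{2j}. -/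
def rf2 : Grass n := ∑ j : Fin n, fgen n ⟨2*j.1, by omega⟩ * fgen n ⟨2*j.1+1, by omega⟩

/-- The generalized norm squared x² = x̲² + x`² as an element of 𝒫. -/
def r2 : SuperPoly m n := (rb2 m) ⊗ₜ 1 + 1 ⊗ₜ (rf2 n)

/-- The grade-`i` part of the Grassmann algebra. -/
def fgrade (i : ℕ) : Submodule ℝ (Grass n) :=
  (LinearMap.range (ExteriorAlgebra.ι ℝ (M := Fin (2*n) → ℝ)))^i

/-- The space 𝒫_k of super-polynomials homogeneous of total degree k. -/
def P (k : ℕ) : Submodule ℝ (SuperPoly m n) :=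
  ⨆ i : Fin (k+1), Submodule.map₂ (TensorProduct.mk ℝ _ _)
    (homogeneousSubmodule (Fin m) ℝ (k - i.1)) (fgrade n i.1)

/-- The space ℋ_k of spherical harmonics of degree k. -/
def H (k : ℕ) : Submodule ℝ (SuperPoly m n) :=
  P m n k ⊓ LinearMap.ker (lap m n)

/-- The super-dimension M = m − 2n. -/
def sdim : ℤ := (m : ℤ) - 2*n

/-- The super Euler operator 𝔼 = ∑ x_j ∂_{x_j} + ∑ x`_j ∂_{x`_j}. -/
def euler : SuperPoly m n →ₗ[ℝ] SuperPoly m n :=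
  LinearMap.rTensor (Grass n)
      (∑ j : Fin m, LinearMap.mulLeft ℝ (X j) ∘ₗ (pderiv j).toLinearMap) +
    LinearMap.lTensor (MvPolynomial (Fin m) ℝ)
      (∑ i : Fin (2*n), LinearMap.mulLeft ℝ (fgen n i) ∘ₗ fpderiv n i)

/-- 𝒫_k as the k-eigenspace of the Euler operator: {ω ∈ 𝒫 : 𝔼ω = kω}. -/
def PE (k : ℕ) : Submodule ℝ (SuperPoly m n) :=
  LinearMap.ker (euler m n - (k : ℝ) • LinearMap.id)

/-- ℋ_k = {ω ∈ 𝒫_k : Δω = 0}. -/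
def HE (k : ℕ) : Submodule ℝ (SuperPoly m n) :=
  PE m n k ⊓ LinearMap.ker (lap m n)

/-- The super Laplace–Beltrami operator Δ_LB = x²Δ − 𝔼(M − 2 + 𝔼). -/
def lapLB : SuperPoly m n →ₗ[ℝ] SuperPoly m n :=
  LinearMap.mulLeft ℝ (r2 m n) ∘ₗ lap m n -
    euler m n ∘ₗ (((sdim m n : ℝ) - 2) • LinearMap.id + euler m n)

/-- The projection operator
ℙ̃_i^k = ∏_{l=0, l≠i}^{⌊k/2⌋} (Δ_LB + (k−2l)(M−2+k−2l)) / (2(i−l)(2k−2i−2l+M−2)),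
realized as the evaluation at Δ_LB of the corresponding polynomial. -/
def lbProj (m n k i : ℕ) : SuperPoly m n →ₗ[ℝ] SuperPoly m n :=
  Polynomial.aeval (lapLB m n)
    (∏ l ∈ (Finset.range (k/2 + 1)).erase i,
      Polynomial.C (2*((i:ℝ) - l)*(2*k - 2*i - 2*l + (sdim m n : ℝ) - 2))⁻¹ *
        (Polynomial.X + Polynomial.C (((k:ℝ) - 2*l)*((sdim m n : ℝ) - 2 + k - 2*l))))

/-! Multiplication by x² raises the Euler degree by 2 and satisfies Δ(x² f) = x² Δf + 2M f + 4𝔼f.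
Iterating, x^{2j} H_{k−2j} is an eigenvector of Δ_LB with eigenvalue μ_j = −(k−2j)(M−2+k−2j).
Since μ_i − μ_l = 2(i−l)(2k−2i−2l+M−2), the polynomial defining ℙ̃_i^k is the Lagrange basis
polynomial for the nodes μ_0, …, μ_{⌊k/2⌋}, which are distinct when M ∉ {0, −2, −4, …}; so it
takes the value δ_{ij} at μ_j. -/

section Grassmann

variable {n}

def evenIdx (j : Fin n) : Fin (2*n) := ⟨2*j, by omega⟩

def oddIdx (j : Fin n) : Fin (2*n) := ⟨2*j+1, by omega⟩

lemma evenIdx_ne_oddIdx (a b : Fin n) : evenIdx a ≠ oddIdx b := by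
  simp only [evenIdx, oddIdx, ne_eq, Fin.mk.injEq]; omega

lemma evenIdx_inj {a b : Fin n} : evenIdx a = evenIdx b ↔ a = b := by
  simp only [evenIdx, Fin.ext_iff]; omega

lemma oddIdx_inj {a b : Fin n} : oddIdx a = oddIdx b ↔ a = b := by
  simp only [oddIdx, Fin.ext_iff]; omega

lemma Fin.sum_univ_two_mul {β : Type*} [AddCommMonoid β] (f : Fin (2*n) → β) :
    ∑ i, f i = ∑ a, (f (evenIdx a) + f (oddIdx a)) := by
  rw [← (finProdFinEquiv.trans (finCongr (Nat.mul_comm n 2))).sum_comp, Fintype.sum_prod_type]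
  refine Finset.sum_congr rfl fun a _ => ?_
  rw [Fin.sum_univ_two]
  congr 2 <;> ext <;> simp [evenIdx, oddIdx, add_comm]

variable (n)

lemma rf2_eq_sum : rf2 n = ∑ j, fgen n (evenIdx j) * fgen n (oddIdx j) := rfl

def fpderivPair (j : Fin n) : Grass n →ₗ[ℝ] Grass n :=
  fpderiv n (evenIdx j) ∘ₗ fpderiv n (oddIdx j)

lemma lapF_eq_sum : lapF n = (4:ℝ) • ∑ j, fpderivPair n j := rfl

def eulerF : Grass n →ₗ[ℝ] Grass n :=
  ∑ i : Fin (2*n), LinearMap.mulLeft ℝ (fgen n i) ∘ₗ fpderiv n i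

lemma fgen_mul_comm (a b : Fin (2*n)) : fgen n a * fgen n b = -(fgen n b * fgen n a) :=
  eq_neg_of_add_eq_zero_left (ExteriorAlgebra.ι_add_mul_swap _ _)

lemma fgen_mul_fgen_mul_comm (a b : Fin (2*n)) (g : Grass n) :
    fgen n a * (fgen n b * g) = -(fgen n b * (fgen n a * g)) := by
  rw [← mul_assoc, fgen_mul_comm, neg_mul, mul_assoc]

lemma fpderiv_fgen_mul (i a : Fin (2*n)) (g : Grass n) :
    fpderiv n i (fgen n a * g) = (if i = a then g else 0) - fgen n a * fpderiv n i g := by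
  rw [fpderiv, fgen, CliffordAlgebra.contractLeft_ι_mul]
  congr 1
  simp [LinearMap.proj, Pi.single_apply, ite_smul]

lemma eulerF_fgen_mul (a : Fin (2*n)) (g : Grass n) :
    eulerF n (fgen n a * g) = fgen n a * eulerF n g + fgen n a * g := by
  simp only [eulerF, LinearMap.sum_apply, LinearMap.comp_apply, LinearMap.mulLeft_apply,
    fpderiv_fgen_mul, mul_sub, mul_ite, mul_zero, Finset.sum_sub_distrib, Finset.sum_ite_eq',
    Finset.mem_univ, if_true, fgen_mul_fgen_mul_comm n _ a, Finset.sum_neg_distrib, Finset.mul_sum]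
  abel

lemma eulerF_rf2_mul (g : Grass n) :
    eulerF n (rf2 n * g) = rf2 n * eulerF n g + (2:ℝ) • (rf2 n * g) := by
  simp only [rf2_eq_sum, Finset.sum_mul, map_sum, mul_assoc, eulerF_fgen_mul, mul_add,
    Finset.sum_add_distrib, Finset.smul_sum, two_smul]
  abel

lemma fpderiv_fgen_mul_fgen_mul (i a b : Fin (2*n)) (g : Grass n) :
    fpderiv n i (fgen n a * (fgen n b * g)) = fgen n a * (fgen n b * fpderiv n i g) +
      ((if i = a then fgen n b * g else 0) - if i = b then fgen n a * g else 0) := by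
  rw [fpderiv_fgen_mul, fpderiv_fgen_mul]
  split_ifs <;> simp only [mul_sub, mul_zero] <;> abel

lemma fpderivPair_fgen_mul_fgen_mul (j a : Fin n) (g : Grass n) :
    fpderivPair n j (fgen n (evenIdx a) * (fgen n (oddIdx a) * g)) =
      fgen n (evenIdx a) * (fgen n (oddIdx a) * fpderivPair n j g) +
      if j = a then fgen n (evenIdx a) * fpderiv n (evenIdx a) g +
        fgen n (oddIdx a) * fpderiv n (oddIdx a) g - g else 0 := by
  by_cases hja : j = a
  · subst hja
    simp only [fpderivPair, LinearMap.coe_comp, Function.comp_apply, fpderiv_fgen_mul,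
      (evenIdx_ne_oddIdx _ _).symm, ↓reduceIte, zero_sub, map_neg, map_sub, evenIdx_ne_oddIdx,
      sub_neg_eq_add, mul_add, neg_sub]
    abel
  · simp [fpderivPair, fpderiv_fgen_mul_fgen_mul, evenIdx_ne_oddIdx, (evenIdx_ne_oddIdx _ _).symm,
      evenIdx_inj, oddIdx_inj, hja]

lemma lapF_fgen_mul_fgen_mul (a : Fin n) (g : Grass n) :
    lapF n (fgen n (evenIdx a) * (fgen n (oddIdx a) * g)) =
      fgen n (evenIdx a) * (fgen n (oddIdx a) * lapF n g) +
        (4:ℝ) • (fgen n (evenIdx a) * fpderiv n (evenIdx a) g +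
          fgen n (oddIdx a) * fpderiv n (oddIdx a) g - g) := by
  simp only [lapF_eq_sum, LinearMap.smul_apply, LinearMap.sum_apply, fpderivPair_fgen_mul_fgen_mul,
    Finset.sum_add_distrib, Finset.sum_ite_eq', Finset.mem_univ, if_true, Finset.mul_sum,
    mul_smul_comm, smul_add]

lemma lapF_rf2_mul (g : Grass n) :
    lapF n (rf2 n * g) = rf2 n * lapF n g + (4:ℝ) • eulerF n g - (4 * n : ℝ) • g := by
  have hE : eulerF n g = ∑ a, (fgen n (evenIdx a) * fpderiv n (evenIdx a) g +
      fgen n (oddIdx a) * fpderiv n (oddIdx a) g) := by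
    rw [eulerF, LinearMap.sum_apply]
    exact Fin.sum_univ_two_mul fun i => fgen n i * fpderiv n i g
  simp only [rf2_eq_sum, Finset.sum_mul, mul_assoc, map_sum, lapF_fgen_mul_fgen_mul,
    Finset.sum_add_distrib, ← Finset.smul_sum, Finset.sum_sub_distrib, ← hE, Finset.sum_const,
    Finset.card_univ, Fintype.card_fin]
  rw [← Nat.cast_smul_eq_nsmul ℝ]
  module

end Grassmann

section Bosonic

def eulerB : MvPolynomial (Fin m) ℝ →ₗ[ℝ] MvPolynomial (Fin m) ℝ :=
  ∑ j : Fin m, LinearMap.mulLeft ℝ (X j) ∘ₗ (pderiv j).toLinearMap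

lemma pderiv_rb2 (j : Fin m) : pderiv j (rb2 m) = -(2 * X j) := by
  simp [rb2, pderiv_X, Pi.single_apply, mul_comm]

lemma eulerB_rb2_mul (p : MvPolynomial (Fin m) ℝ) :
    eulerB m (rb2 m * p) = rb2 m * eulerB m p + (2:ℝ) • (rb2 m * p) := by
  have hX : ∀ j : Fin m,
      X j * pderiv j (rb2 m * p) = rb2 m * (X j * pderiv j p) - 2 * (X j ^ 2 * p) := by
    intro j
    rw [pderiv_mul, pderiv_rb2]
    ring
  simp only [eulerB, LinearMap.sum_apply, LinearMap.comp_apply, LinearMap.mulLeft_apply,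
    Derivation.coeFn_coe, hX, Finset.sum_sub_distrib, ← Finset.mul_sum, ← Finset.sum_mul]
  rw [smul_eq_C_mul, map_ofNat, rb2]
  ring

lemma lapB_rb2_mul (p : MvPolynomial (Fin m) ℝ) :
    lapB m (rb2 m * p) = rb2 m * lapB m p + ((2:ℝ) * m) • p + (4:ℝ) • eulerB m p := by
  have hX : ∀ j : Fin m, pderiv j (pderiv j (rb2 m * p)) =
      rb2 m * pderiv j (pderiv j p) - 2 * p - 4 * (X j * pderiv j p) := by
    intro j
    have h2 : pderiv j (2 : MvPolynomial (Fin m) ℝ) = 0 := (pderiv j).map_natCast 2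
    simp only [Derivation.leibniz, smul_eq_mul, pderiv_rb2, map_add, map_neg, pderiv_X_self, h2,
      mul_zero, add_zero]
    ring
  simp only [lapB, eulerB, LinearMap.neg_apply, LinearMap.sum_apply, LinearMap.comp_apply,
    LinearMap.mulLeft_apply, Derivation.coeFn_coe, hX, Finset.sum_sub_distrib, ← Finset.mul_sum,
    Finset.sum_const, Finset.card_univ, Fintype.card_fin, smul_eq_C_mul, map_mul, map_ofNat,
    map_natCast, nsmul_eq_mul]
  ring

end Bosonic

section Super

lemma euler_eq : euler m n =
    LinearMap.rTensor (Grass n) (eulerB m) +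
      LinearMap.lTensor (MvPolynomial (Fin m) ℝ) (eulerF n) :=
  rfl

lemma euler_r2_mul (f : SuperPoly m n) :
    euler m n (r2 m n * f) = r2 m n * euler m n f + (2:ℝ) • (r2 m n * f) := by
  induction f using TensorProduct.induction_on with
  | zero => simp
  | tmul p g =>
    simp only [euler_eq, r2, add_mul, Algebra.TensorProduct.tmul_mul_tmul, one_mul,
      map_add, LinearMap.add_apply, LinearMap.rTensor_tmul, LinearMap.lTensor_tmul, eulerB_rb2_mul,
      eulerF_rf2_mul, TensorProduct.add_tmul, TensorProduct.tmul_add, TensorProduct.tmul_smul,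
      ← TensorProduct.smul_tmul', mul_add, smul_add]
    module
  | add u v hu hv =>
    simp only [mul_add, map_add, hu, hv, smul_add]
    abel

lemma lap_r2_mul (f : SuperPoly m n) :
    lap m n (r2 m n * f) =
      r2 m n * lap m n f + (2 * (sdim m n : ℝ)) • f + (4:ℝ) • euler m n f := by
  induction f using TensorProduct.induction_on with
  | zero => simp
  | tmul p g =>
    simp only [lap, euler_eq, r2, sdim, add_mul, Algebra.TensorProduct.tmul_mul_tmul, one_mul,
      map_add, LinearMap.add_apply, LinearMap.rTensor_tmul, LinearMap.lTensor_tmul,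
      lapB_rb2_mul, lapF_rf2_mul, TensorProduct.add_tmul, TensorProduct.tmul_add,
      TensorProduct.tmul_sub, TensorProduct.tmul_smul, ← TensorProduct.smul_tmul', mul_add,
      smul_add, Int.cast_sub, Int.cast_natCast, Int.cast_mul, Int.cast_ofNat]
    module
  | add u v hu hv =>
    simp only [mul_add, map_add, hu, hv, smul_add]
    abel

variable {m n}

lemma euler_r2_pow_mul {c : ℝ} {H : SuperPoly m n} (hE : euler m n H = c • H) (t : ℕ) :
    euler m n (r2 m n ^ t * H) = (c + 2 * t) • (r2 m n ^ t * H) := by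
  induction t with
  | zero => simpa using hE
  | succ t ih =>
    rw [pow_succ', mul_assoc, euler_r2_mul, ih, mul_smul_comm, ← add_smul]
    push_cast
    ring_nf

lemma r2_mul_lap_r2_pow_mul {c : ℝ} {H : SuperPoly m n} (hE : euler m n H = c • H)
    (hL : lap m n H = 0) (t : ℕ) :
    r2 m n * lap m n (r2 m n ^ t * H) =
      (2 * t * ((sdim m n : ℝ) + 2 * c + 2 * t - 2)) • (r2 m n ^ t * H) := by
  induction t with
  | zero => simp [hL]
  | succ t ih =>
    rw [pow_succ', mul_assoc, lap_r2_mul, mul_add, mul_add, ih, euler_r2_pow_mul hE,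
      mul_smul_comm, mul_smul_comm, mul_smul_comm, mul_smul_comm, smul_smul]
    module

lemma lapLB_r2_pow_mul {c : ℝ} {H : SuperPoly m n} (hE : euler m n H = c • H)
    (hL : lap m n H = 0) (t : ℕ) :
    lapLB m n (r2 m n ^ t * H) = (-(c * ((sdim m n : ℝ) - 2 + c))) • (r2 m n ^ t * H) := by
  simp only [lapLB, LinearMap.sub_apply, LinearMap.comp_apply, LinearMap.mulLeft_apply,
    LinearMap.add_apply, LinearMap.smul_apply, LinearMap.id_apply, r2_mul_lap_r2_pow_mul hE hL,
    euler_r2_pow_mul hE, map_add, map_smul]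
  module

lemma euler_eq_smul_of_mem_PE {k : ℕ} {f : SuperPoly m n} (hf : f ∈ PE m n k) :
    euler m n f = (k : ℝ) • f := by
  simpa [PE, sub_eq_zero] using hf

end Super

section Interpolation

open Polynomial

def lbNode (M : ℝ) (k l : ℕ) : ℝ := -(((k:ℝ) - 2 * l) * (M - 2 + k - 2 * l))

lemma lbNode_sub_lbNode (M : ℝ) (k i l : ℕ) :
    lbNode M k i - lbNode M k l = 2 * ((i:ℝ) - l) * (2 * k - 2 * i - 2 * l + M - 2) := by
  unfold lbNode; ring

lemma lbProj_eq_aeval_basis (m n k i : ℕ) :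
    lbProj m n k i =
      aeval (lapLB m n) (Lagrange.basis (Finset.range (k/2 + 1)) (lbNode (sdim m n) k) i) := by
  rw [lbProj, Lagrange.basis]
  refine congrArg _ (Finset.prod_congr rfl fun l _ => ?_)
  rw [Lagrange.basisDivisor, lbNode_sub_lbNode, lbNode, map_neg, sub_neg_eq_add]

lemma lbNode_injOn {M : ℤ} (hM : ∀ j : ℕ, M ≠ -(2*(j:ℤ))) (k : ℕ) :
    Set.InjOn (lbNode M k) (Finset.range (k/2 + 1)) := by
  intro i hi l hl hil
  by_contra hne
  simp only [Finset.coe_range, Set.mem_Iio] at hi hl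
  obtain ⟨t, rfl⟩ : ∃ t : ℕ, k = i + l + 1 + t := ⟨k - (i + l + 1), by omega⟩
  have hMt : (M : ℝ) + 2 * t ≠ 0 := by exact_mod_cast fun h => hM t (by omega)
  have hil' : (i:ℝ) - l ≠ 0 := sub_ne_zero.mpr (by exact_mod_cast hne)
  refine mul_ne_zero (mul_ne_zero two_ne_zero hil') hMt ?_
  have := lbNode_sub_lbNode M (i + l + 1 + t) i l
  rw [hil, sub_self] at this
  push_cast at this
  linarith

end Interpolation

theorem lbProj_apply_general (m n : ℕ)
    (hM : ∀ j : ℕ, sdim m n ≠ -(2*(j:ℤ)))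
    (k i j : ℕ) (hj : j ≤ k/2)
    (Hkj : SuperPoly m n) (hH : Hkj ∈ HE m n (k - 2*j)) :
    lbProj m n k i ((r2 m n)^j * Hkj) =
      if i = j then (r2 m n)^j * Hkj else 0 := by
  obtain ⟨hE, hL⟩ := hH
  have hLB : lapLB m n (r2 m n ^ j * Hkj) = lbNode (sdim m n) k j • (r2 m n ^ j * Hkj) := by
    rw [lapLB_r2_pow_mul (euler_eq_smul_of_mem_PE hE) hL, lbNode, Nat.cast_sub (by omega)]
    push_cast
    ring_nf
  have hjs : j ∈ Finset.range (k/2 + 1) := Finset.mem_range.mpr (by omega)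
  rw [lbProj_eq_aeval_basis, Module.End.aeval_apply_of_mem_apply_eq_smul hLB]
  split_ifs with hij
  · subst hij
    rw [Lagrange.eval_basis_self (lbNode_injOn hM k) hjs, one_smul]
  · rw [Lagrange.eval_basis_of_ne hij hjs, zero_smul]

/-- assume M ∉ {0,−2,−4,…}.  For all 0 ≤ i, j ≤ ⌊k/2⌋ and all
H_{k−2j} ∈ ℋ_{k−2j}: ℙ̃_i^k(x^{2j} H_{k−2j}) = δ_{ij} x^{2j} H_{k−2j}. -/
theorem lbProj_apply (m n : ℕ) (hm : 1 ≤ m) (hn : 1 ≤ n)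
    (hM : ∀ j : ℕ, sdim m n ≠ -(2*(j:ℤ)))
    (k i j : ℕ) (hi : i ≤ k/2) (hj : j ≤ k/2)
    (Hkj : SuperPoly m n) (hH : Hkj ∈ HE m n (k - 2*j)) :
    lbProj m n k i ((r2 m n)^j * Hkj) =
      if i = j then (r2 m n)^j * Hkj else 0 :=
  lbProj_apply_general m n hM k i j hj Hkj hH

end
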